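/- Let Z > 0 and H > 0. Each interval ((k − 1/2)π/Z, (k + 1/2)π/Z) with k ≥ 1 integer not containing H contains exactly one positive solution β of tan(βZ) = 2Hβ/(β² − H²). -/

import Mathlib

open Real Set Filter Topology

/-!
On `((k - 1/2)π/Z, (k + 1/2)π/Z)` the map `β ↦ βZ - kπ` lands in `(-π/2, π/2)`, so `tan (βZ)`
is continuous and strictly increasing there, from `-∞` to `+∞`. Since `H` is not in the interval,
the interval lies in one of the branches `(-H, H)`, `(H, ∞)` of `2Hβ/(β² - H²)`, on each of which
that function is continuous and strictly decreasing. Hence `tan (βZ) - 2Hβ/(β² - H²)` is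
continuous, strictly increasing and runs from `-∞` to `+∞`, so it has exactly one zero.
-/

theorem existsUnique_eq_of_strictMonoOn_of_antitoneOn {α : Type*}
    [ConditionallyCompleteLinearOrder α] [TopologicalSpace α] [OrderTopology α] [DenselyOrdered α]
    {f g : α → ℝ} {a b : α} (hab : a < b)
    (hf : StrictMonoOn f (Ioo a b)) (hg : AntitoneOn g (Ioo a b))
    (hfc : ContinuousOn f (Ioo a b)) (hgc : ContinuousOn g (Ioo a b))
    (hfa : Tendsto f (𝓝[>] a) atBot) (hfb : Tendsto f (𝓝[<] b) atTop) :
    ∃! x, x ∈ Ioo a b ∧ f x = g x := by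
  -- Antitonicity bounds `-g` above near `a` and below near `b` by its value at an interior point.
  obtain ⟨c, hac, hcb⟩ := exists_between hab
  have hbot : Tendsto (fun x => f x + -g x) (𝓝[>] a) atBot :=
    tendsto_atBot_add_right_of_ge' _ (-g c) hfa <| by
      filter_upwards [Ioo_mem_nhdsGT hac] with x hx
      exact neg_le_neg (hg ⟨hx.1, hx.2.trans hcb⟩ ⟨hac, hcb⟩ hx.2.le)
  have htop : Tendsto (fun x => f x + -g x) (𝓝[<] b) atTop :=
    tendsto_atTop_add_right_of_le' _ (-g c) hfb <| by
      filter_upwards [Ioo_mem_nhdsLT hcb] with x hx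
      exact neg_le_neg (hg ⟨hac, hcb⟩ ⟨hac.trans hx.1, hx.2⟩ hx.1.le)
  have hmono : StrictMonoOn (fun x => f x + -g x) (Ioo a b) := fun x hx y hy hxy => by
    linarith [hf hx hy hxy, hg hx hy hxy.le]
  have hcont : ContinuousOn (fun x => f x + -g x) (Ioo a b) := hfc.add hgc.neg
  obtain ⟨x, hx, hx0 : f x + -g x = 0⟩ := hcont.surjOn_of_tendsto (nonempty_Ioo.2 hab)
    ((tendsto_comp_coe_Ioo_atBot hab).2 hbot) ((tendsto_comp_coe_Ioo_atTop hab).2 htop)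
    (mem_univ 0)
  exact ⟨x, ⟨hx, by linarith⟩, fun y ⟨hy, hyx⟩ => hmono.injOn hy hx (by linarith)⟩

theorem two_mul_div_sq_sub_sq_lt {H x y : ℝ} (hH : 0 < H) (hxy : x < y)
    (hden : 0 < (x ^ 2 - H ^ 2) * (y ^ 2 - H ^ 2)) (hxyH : 0 < x * y + H ^ 2) :
    2 * H * y / (y ^ 2 - H ^ 2) < 2 * H * x / (x ^ 2 - H ^ 2) := by
  have hx : x ^ 2 - H ^ 2 ≠ 0 := left_ne_zero_of_mul hden.ne'
  have hy : y ^ 2 - H ^ 2 ≠ 0 := right_ne_zero_of_mul hden.ne'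
  have key : 2 * H * x / (x ^ 2 - H ^ 2) - 2 * H * y / (y ^ 2 - H ^ 2) =
      2 * H * (y - x) * (x * y + H ^ 2) / ((x ^ 2 - H ^ 2) * (y ^ 2 - H ^ 2)) := by
    field_simp
    ring
  rw [← sub_pos, key]
  exact div_pos (mul_pos (mul_pos (mul_pos two_pos hH) (sub_pos.2 hxy)) hxyH) hden

theorem strictAntiOn_two_mul_div_sq_sub_sq_Ioi {H : ℝ} (hH : 0 < H) :
    StrictAntiOn (fun β => 2 * H * β / (β ^ 2 - H ^ 2)) (Ioi H) := by
  intro x (hx : H < x) y (hy : H < y) hxy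
  exact two_mul_div_sq_sub_sq_lt hH hxy (mul_pos (by nlinarith) (by nlinarith)) (by nlinarith)

theorem strictAntiOn_two_mul_div_sq_sub_sq_Ioo {H : ℝ} (hH : 0 < H) :
    StrictAntiOn (fun β => 2 * H * β / (β ^ 2 - H ^ 2)) (Ioo (-H) H) := by
  rintro x ⟨hx₁, hx₂⟩ y ⟨hy₁, hy₂⟩ hxy
  exact two_mul_div_sq_sub_sq_lt hH hxy (mul_pos_of_neg_of_neg (by nlinarith) (by nlinarith))
    (by nlinarith)

section TanBranch

variable {Z : ℝ} (k : ℤ)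

theorem neg_pi_div_two_lt_mul_sub_int_mul_pi_iff (hZ : 0 < Z) {β : ℝ} :
    -(π / 2) < β * Z - k * π ↔ ((k : ℝ) - 1 / 2) * π / Z < β := by
  rw [div_lt_iff₀ hZ]
  constructor <;> intro h <;> linarith

theorem mul_sub_int_mul_pi_lt_pi_div_two_iff (hZ : 0 < Z) {β : ℝ} :
    β * Z - k * π < π / 2 ↔ β < ((k : ℝ) + 1 / 2) * π / Z := by
  rw [lt_div_iff₀ hZ]
  constructor <;> intro h <;> linarith

theorem tan_mul_eq_tan_comp_sub_int_mul_pi :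
    (fun β => tan (β * Z)) = tan ∘ fun β => β * Z - k * π :=
  funext fun β => (tan_sub_int_mul_pi (β * Z) k).symm

theorem mapsTo_mul_sub_int_mul_pi_Ioo (hZ : 0 < Z) :
    MapsTo (fun β => β * Z - k * π) (Ioo (((k : ℝ) - 1 / 2) * π / Z) (((k : ℝ) + 1 / 2) * π / Z))
      (Ioo (-(π / 2)) (π / 2)) := fun _ hβ =>
  ⟨(neg_pi_div_two_lt_mul_sub_int_mul_pi_iff k hZ).2 hβ.1,
    (mul_sub_int_mul_pi_lt_pi_div_two_iff k hZ).2 hβ.2⟩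

theorem strictMonoOn_tan_mul (hZ : 0 < Z) :
    StrictMonoOn (fun β => tan (β * Z))
      (Ioo (((k : ℝ) - 1 / 2) * π / Z) (((k : ℝ) + 1 / 2) * π / Z)) := by
  rw [tan_mul_eq_tan_comp_sub_int_mul_pi k]
  exact strictMonoOn_tan.comp (fun x _ y _ hxy => by simpa using mul_lt_mul_of_pos_right hxy hZ)
    (mapsTo_mul_sub_int_mul_pi_Ioo k hZ)

theorem continuousOn_tan_mul (hZ : 0 < Z) :
    ContinuousOn (fun β => tan (β * Z))
      (Ioo (((k : ℝ) - 1 / 2) * π / Z) (((k : ℝ) + 1 / 2) * π / Z)) := by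
  rw [tan_mul_eq_tan_comp_sub_int_mul_pi k]
  exact continuousOn_tan_Ioo.comp (by fun_prop) (mapsTo_mul_sub_int_mul_pi_Ioo k hZ)

theorem tendsto_tan_mul_nhdsGT (hZ : 0 < Z) :
    Tendsto (fun β => tan (β * Z)) (𝓝[>] (((k : ℝ) - 1 / 2) * π / Z)) atBot := by
  have hend : ((k : ℝ) - 1 / 2) * π / Z * Z - k * π = -(π / 2) := by
    field_simp
    ring
  have hshift : Tendsto (fun β => β * Z - k * π) (𝓝[>] (((k : ℝ) - 1 / 2) * π / Z))
      (𝓝[>] (-(π / 2))) := by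
    rw [← hend]
    exact (Continuous.continuousWithinAt (by fun_prop)).tendsto_nhdsWithin fun β hβ =>
      hend ▸ (neg_pi_div_two_lt_mul_sub_int_mul_pi_iff k hZ).2 hβ
  rw [tan_mul_eq_tan_comp_sub_int_mul_pi k]
  exact tendsto_tan_neg_pi_div_two.comp hshift

theorem tendsto_tan_mul_nhdsLT (hZ : 0 < Z) :
    Tendsto (fun β => tan (β * Z)) (𝓝[<] (((k : ℝ) + 1 / 2) * π / Z)) atTop := by
  have hend : ((k : ℝ) + 1 / 2) * π / Z * Z - k * π = π / 2 := by
    field_simp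
    ring
  have hshift : Tendsto (fun β => β * Z - k * π) (𝓝[<] (((k : ℝ) + 1 / 2) * π / Z))
      (𝓝[<] (π / 2)) := by
    rw [← hend]
    exact (Continuous.continuousWithinAt (by fun_prop)).tendsto_nhdsWithin fun β hβ =>
      hend ▸ (mul_sub_int_mul_pi_lt_pi_div_two_iff k hZ).2 hβ
  rw [tan_mul_eq_tan_comp_sub_int_mul_pi k]
  exact tendsto_tan_pi_div_two.comp hshift

end TanBranch

theorem stmt_17 (Z H : ℝ) (hZ : 0 < Z) (hH : 0 < H) (k : ℤ) (hk : 1 ≤ k)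
    (hHnot : H ∉ Set.Ioo (((k : ℝ) - 1/2) * π / Z) (((k : ℝ) + 1/2) * π / Z)) :
    ∃! β : ℝ, β ∈ Set.Ioo (((k : ℝ) - 1/2) * π / Z) (((k : ℝ) + 1/2) * π / Z) ∧
      0 < β ∧ Real.tan (β * Z) = 2 * H * β / (β ^ 2 - H ^ 2) := by
  set a := ((k : ℝ) - 1 / 2) * π / Z
  set b := ((k : ℝ) + 1 / 2) * π / Z
  have ha : 0 < a := div_pos (by nlinarith [pi_pos, (by exact_mod_cast hk : (1 : ℝ) ≤ k)]) hZ
  have hab : a < b := div_lt_div_of_pos_right (by nlinarith [pi_pos]) hZ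
  have hbranch : Ioo a b ⊆ Ioi H ∨ Ioo a b ⊆ Ioo (-H) H := by
    rcases le_or_gt H a with hHa | hHa
    · exact .inl fun β hβ => hHa.trans_lt hβ.1
    · refine .inr fun β hβ => ⟨by linarith [hβ.1], hβ.2.trans_le ?_⟩
      by_contra! hbH
      exact hHnot ⟨hHa, hbH⟩
  have hg : AntitoneOn (fun β => 2 * H * β / (β ^ 2 - H ^ 2)) (Ioo a b) :=
    (hbranch.elim (strictAntiOn_two_mul_div_sq_sub_sq_Ioi hH).mono
      (strictAntiOn_two_mul_div_sq_sub_sq_Ioo hH).mono).antitoneOn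
  have hgc : ContinuousOn (fun β => 2 * H * β / (β ^ 2 - H ^ 2)) (Ioo a b) :=
    ContinuousOn.div (by fun_prop) (by fun_prop) fun β hβ => sub_ne_zero.2 fun hsq =>
      hHnot ((sq_eq_sq₀ (ha.trans hβ.1).le hH.le).1 hsq ▸ hβ)
  obtain ⟨β, ⟨hβ, hβeq⟩, huniq⟩ := existsUnique_eq_of_strictMonoOn_of_antitoneOn hab
    (strictMonoOn_tan_mul k hZ) hg (continuousOn_tan_mul k hZ) hgc
    (tendsto_tan_mul_nhdsGT k hZ) (tendsto_tan_mul_nhdsLT k hZ)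
  exact ⟨β, ⟨hβ, ha.trans hβ.1, hβeq⟩, fun γ ⟨hγ, _, hγeq⟩ => huniq γ ⟨hγ, hγeq⟩⟩
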